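/- arXiv:2603.02721 — 6 statements merged into one kernel-verified Lean document; each statement's English description precedes it below -/
import Mathlib

section
/- Let N = 2^n with n ≥ 1 and let m be an odd integer. Then the Zadoff–Chu sequence z[k] = (1/√N)·exp(jπ m k²/N), k = 0,...,N−1, has zero auto-correlation: Σ_{k=0}^{N−1} z*[(k−s) mod N]·z[k] = δ[s mod N] for every integer s, i.e., the sum equals 1 if s ≡ 0 (mod N) and 0 otherwise. -/
open Complex Finset

/-- Zero auto-correlation of the Zadoff–Chu sequence of length `N = 2^n` with odd root `m`:
`Σ_{k} z*[(k−s) mod N] z[k] = δ[s mod N]`. -/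
theorem zc_zero_autocorrelation (n : ℕ) (hn : 1 ≤ n) (m : ℤ) (hm : Odd m) (s : ℤ) :
    let N : ℤ := 2 ^ n
    let z : ℤ → ℂ := fun k =>
      (1 / Real.sqrt (2 ^ n) : ℝ) *
        Complex.exp (Complex.I * (Real.pi : ℂ) * (m : ℂ) * (k : ℂ) ^ 2 / ((2 ^ n : ℕ) : ℂ))
    (∑ k ∈ Finset.range (2 ^ n),
        (starRingEnd ℂ) (z (((k : ℤ) - s) % N)) * z (k : ℤ)) =
      if s % N = 0 then 1 else 0 := by
  intro N z
  have hNR : (0:ℝ) < 2 ^ n := by positivity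
  have hNC : ((2:ℂ)) ^ n ≠ 0 := pow_ne_zero _ two_ne_zero
  set π : ℝ := Real.pi with hπdef
  have h2πI : (2:ℂ) * (π:ℂ) * I ≠ 0 := by
    simp [Complex.I_ne_zero, Real.pi_ne_zero, hπdef]
  set c : ℂ := Complex.exp (2 * (π:ℂ) * I * m * s / (2 ^ n)) with hcdef
  set C : ℂ := (1 / (2 ^ n : ℂ)) * Complex.exp (-(I * (π:ℂ) * m * (s:ℂ) ^ 2 / (2 ^ n))) with hCdef
  have hcast : ((2 ^ n : ℕ) : ℂ) = (2:ℂ) ^ n := by push_cast; ring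
  have hsqrt : (((1 / Real.sqrt (2 ^ n) : ℝ)) : ℂ) * ((1 / Real.sqrt (2 ^ n) : ℝ) : ℂ)
      = 1 / (2 ^ n : ℂ) := by
    rw [← Complex.ofReal_mul, div_mul_div_comm, one_mul, Real.mul_self_sqrt hNR.le]
    push_cast
    ring
  have hterm : ∀ k ∈ Finset.range (2 ^ n),
      (starRingEnd ℂ) (z (((k : ℤ) - s) % N)) * z (k : ℤ) = C * c ^ k := by
    intro k _
    set j : ℤ := ((k : ℤ) - s) % N with hjdef
    obtain ⟨u, hu⟩ : ∃ u : ℤ, j ^ 2 = ((k:ℤ) - s) ^ 2 + 2 * N * u := by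
      set q : ℤ := ((k:ℤ) - s) / N with hq
      refine ⟨2 ^ (n-1) * q ^ 2 - q * ((k:ℤ) - s), ?_⟩
      have hj' : j = ((k:ℤ) - s) - N * q := by
        rw [hjdef, hq, Int.emod_def]
      have hN2 : (N : ℤ) = 2 * 2 ^ (n - 1) := by
        show (2:ℤ) ^ n = 2 * 2 ^ (n-1)
        rw [← pow_succ']
        congr 1
        omega
      rw [hj', hN2]
      ring
    have hconj : (starRingEnd ℂ) (z j) =
        ((1 / Real.sqrt (2 ^ n) : ℝ) : ℂ) *
          Complex.exp (-(I * (π:ℂ) * m * ((j:ℤ):ℂ) ^ 2 / (2 ^ n))) := by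
      show (starRingEnd ℂ) (((1 / Real.sqrt (2 ^ n) : ℝ):ℂ) *
          Complex.exp (I * (π:ℂ) * m * ((j:ℤ):ℂ) ^ 2 / ((2 ^ n : ℕ) : ℂ))) = _
      rw [map_mul, Complex.conj_ofReal, ← Complex.exp_conj]
      congr 1
      rw [hcast]
      simp only [map_div₀, map_mul, map_pow, Complex.conj_I, Complex.conj_ofReal,
        map_intCast, map_ofNat]
      ring
    have hjC : ((j:ℤ):ℂ) ^ 2 = ((k:ℂ) - (s:ℂ)) ^ 2 + 2 * (2:ℂ) ^ n * (u:ℂ) := by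
      have h1 : ((j:ℤ):ℂ) ^ 2 = (((k:ℤ):ℂ) - (s:ℂ)) ^ 2 + 2 * ((N:ℤ):ℂ) * (u:ℂ) := by
        exact_mod_cast congrArg (fun x : ℤ => (x : ℂ)) hu
      rw [h1]
      norm_num [N]
    have hzk : z (k : ℤ) = ((1 / Real.sqrt (2 ^ n) : ℝ) : ℂ) *
        Complex.exp (I * (π:ℂ) * m * (k:ℂ) ^ 2 / (2 ^ n)) := by
      show ((1 / Real.sqrt (2 ^ n) : ℝ):ℂ) *
          Complex.exp (I * (π:ℂ) * m * (((k:ℤ)):ℂ) ^ 2 / ((2 ^ n : ℕ) : ℂ)) = _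
      rw [hcast]
      push_cast
      ring_nf
    rw [hconj, hzk, mul_mul_mul_comm, hsqrt, ← Complex.exp_add, hjC]
    have harg : -(I * (π:ℂ) * m * (((k:ℂ) - s) ^ 2 + 2 * (2:ℂ) ^ n * u) / (2 ^ n))
          + I * (π:ℂ) * m * (k:ℂ) ^ 2 / (2 ^ n)
        = (-(I * (π:ℂ) * m * (s:ℂ) ^ 2 / (2 ^ n)) + (k:ℕ) * (2 * (π:ℂ) * I * m * s / (2 ^ n)))
          + (-(m * u) : ℤ) * (2 * (π:ℂ) * I) := by
      push_cast
      field_simp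
      ring
    rw [harg, Complex.exp_add, Complex.exp_int_mul_two_pi_mul_I, mul_one,
      Complex.exp_add, Complex.exp_nat_mul]
    rw [hCdef, hcdef]
    ring
  rw [Finset.sum_congr rfl hterm, ← Finset.mul_sum]
  by_cases h : s % N = 0
  · rw [if_pos h]
    obtain ⟨t, ht⟩ : (N:ℤ) ∣ s := Int.dvd_of_emod_eq_zero h
    have hc1 : c = 1 := by
      rw [hcdef]
      have he : 2 * (π:ℂ) * I * m * s / (2 ^ n) = (m * t : ℤ) * (2 * (π:ℂ) * I) := by
        rw [ht]
        show 2 * (π:ℂ) * I * m * (((2:ℤ)^n * t : ℤ) : ℂ) / (2 ^ n) = _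
        push_cast
        field_simp
      rw [he, Complex.exp_int_mul_two_pi_mul_I]
    rw [hc1]
    simp only [one_pow, Finset.sum_const, Finset.card_range, nsmul_eq_mul, mul_one]
    have hexp1 : Complex.exp (-(I * (π:ℂ) * m * (s:ℂ) ^ 2 / (2 ^ n))) = 1 := by
      have he : -(I * (π:ℂ) * m * (s:ℂ) ^ 2 / (2 ^ n))
          = (-(m * t ^ 2 * 2 ^ (n-1)) : ℤ) * (2 * (π:ℂ) * I) := by
        rw [ht]
        have h2 : ((2:ℂ)) ^ n = 2 * 2 ^ (n-1) := by
          rw [← pow_succ']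
          congr 1
          omega
        show -(I * (π:ℂ) * m * (((2:ℤ)^n * t : ℤ):ℂ) ^ 2 / (2 ^ n)) = _
        push_cast
        rw [h2]
        field_simp
      rw [he, Complex.exp_int_mul_two_pi_mul_I]
    rw [hCdef, hexp1, mul_one]
    push_cast
    field_simp
  · rw [if_neg h]
    have hNds : ¬ ((N:ℤ) ∣ s) := fun hd => h (Int.emod_eq_zero_of_dvd hd)
    have hcop : IsCoprime ((2:ℤ)^n) m := by
      obtain ⟨jj, hjj⟩ := hm
      exact (show IsCoprime (2:ℤ) m from ⟨-jj, 1, by rw [hjj]; ring⟩).pow_left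
    have hc1 : c ≠ 1 := by
      intro hc1
      rw [hcdef, Complex.exp_eq_one_iff] at hc1
      obtain ⟨t, ht⟩ := hc1
      have e1 : (2*(π:ℂ)*I) * ((m:ℂ)*s) = (2 * (π:ℂ) * I * m * s / 2 ^ n) * 2 ^ n := by
        field_simp
      rw [ht] at e1
      have e2 : (m:ℂ) * s = (t:ℂ) * 2 ^ n :=
        mul_left_cancel₀ h2πI (e1.trans (by ring))
      have e3 : m * s = t * 2 ^ n := by exact_mod_cast e2
      have hdvd : (2:ℤ)^n ∣ m * s := ⟨t, by linarith⟩
      exact hNds (hcop.dvd_of_dvd_mul_left hdvd)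
    have hcN : c ^ (2 ^ n) = 1 := by
      rw [hcdef, ← Complex.exp_nat_mul]
      have he : ((2 ^ n : ℕ) : ℂ) * (2 * (π:ℂ) * I * m * s / (2 ^ n)) = (m * s : ℤ) * (2 * (π:ℂ) * I) := by
        push_cast
        field_simp
      rw [he, Complex.exp_int_mul_two_pi_mul_I]
    rw [geom_sum_eq hc1, hcN]
    simp
end

section
/- Let N = 2^n with n ≥ 2 and let K be an integer with 2 < K ≤ N/2. Set m = ⌈log₂ K⌉ − 1. For any choice of K distinct odd integers m_0, ..., m_{K−1} in [1, N−1], there exist indices u ≠ v such that gcd(m_u − m_v, N) ≥ 2^{m+1}. In other words, max_{u≠v} gcd(m_u − m_v, N) ≥ 2^{⌈log₂ K⌉}. -/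
open Finset

/-- For `N = 2^n` and any `K` distinct odd roots in `[1, N−1]` with `2 < K ≤ N/2`,
two of them differ by a multiple of a high power of two:
`max_{u≠v} gcd(m_u − m_v, N) ≥ 2^⌈log₂ K⌉`. -/
theorem pigeonhole_gcd_lower_bound (n K : ℕ) (hn : 2 ≤ n) (hK : 2 < K)
    (hKN : K ≤ 2 ^ n / 2) (m : Fin K → ℤ) (hodd : ∀ u, Odd (m u))
    (hrange : ∀ u, 1 ≤ m u ∧ m u ≤ 2 ^ n - 1) (hinj : Function.Injective m) :
    ∃ u v : Fin K, u ≠ v ∧ (2 ^ Nat.clog 2 K : ℕ) ≤ Int.gcd (m u - m v) (2 ^ n) := by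
  set c := Nat.clog 2 K with hc
  have hc1 : 1 ≤ c := Nat.clog_pos (by norm_num) (by omega)
  obtain ⟨n', rfl⟩ : ∃ n', n = n' + 1 := ⟨n - 1, by omega⟩
  have hKle : K ≤ 2 ^ n' := by
    have h2 : 2 ^ (n' + 1) / 2 = 2 ^ n' := by
      rw [pow_succ, Nat.mul_div_cancel _ (by norm_num)]
    omega
  have hcn : c ≤ n' + 1 := by
    have := Nat.clog_mono_right 2 hKle
    rw [Nat.clog_pow 2 n' (by norm_num)] at this
    omega
  have hlt : 2 ^ (c - 1) < K := by
    have := Nat.pow_pred_clog_lt_self (b := 2) (by norm_num) (by omega : 1 < K)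
    simpa [hc] using this
  -- pigeonhole on residues mod 2^c among odd residues
  set t : Finset ℤ := (Finset.range (2 ^ (c - 1))).image (fun k : ℕ => (2 * k + 1 : ℤ)) with ht
  have htcard : t.card = 2 ^ (c - 1) := by
    rw [ht, Finset.card_image_of_injective _ (fun a b hab => by omega), Finset.card_range]
  have hmaps : ∀ u ∈ (Finset.univ : Finset (Fin K)), (m u % 2 ^ c) ∈ t := by
    intro u _
    have hpos : (0:ℤ) < 2 ^ c := by positivity
    have h0 : 0 ≤ m u % 2 ^ c := Int.emod_nonneg _ (by positivity)
    have h1 : m u % 2 ^ c < 2 ^ c := Int.emod_lt_of_pos _ hpos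
    have hoddr : Odd (m u % 2 ^ c) := by
      rw [Int.odd_iff]
      rw [Int.emod_emod_of_dvd _ (dvd_pow_self (2:ℤ) (by omega : c ≠ 0))]
      exact Int.odd_iff.mp (hodd u)
    rcases hoddr with ⟨j, hj⟩
    have hcc : (2:ℤ) ^ c = 2 * 2 ^ (c - 1) := by
      rw [← pow_succ']
      congr 1
      omega
    have hj0 : 0 ≤ j := by omega
    have hjlt : j < 2 ^ (c - 1) := by omega
    rw [ht, Finset.mem_image]
    refine ⟨j.toNat, Finset.mem_range.mpr ?_, ?_⟩
    · have : ((2:ℤ) ^ (c-1)) = ((2 ^ (c-1) : ℕ) : ℤ) := by push_cast; ring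
      rw [this] at hjlt
      omega
    · omega
  have hcard : t.card < (Finset.univ : Finset (Fin K)).card := by
    rw [htcard, Finset.card_univ, Fintype.card_fin]; exact hlt
  obtain ⟨u, -, v, -, huv, heq⟩ :=
    Finset.exists_ne_map_eq_of_card_lt_of_maps_to hcard hmaps
  refine ⟨u, v, huv, ?_⟩
  have hdvd : (2:ℤ) ^ c ∣ (m u - m v) := (Int.ModEq.symm (heq : _)).dvd
  have hdvd2 : (2:ℤ) ^ c ∣ (2:ℤ) ^ (n' + 1) := pow_dvd_pow 2 hcn
  have hg : (2:ℤ) ^ c ∣ (Int.gcd (m u - m v) (2 ^ (n' + 1)) : ℤ) :=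
    Int.dvd_coe_gcd hdvd hdvd2
  have hg' : 2 ^ c ∣ Int.gcd (m u - m v) (2 ^ (n' + 1)) := by
    exact_mod_cast hg
  have hpos : 0 < Int.gcd (m u - m v) (2 ^ (n' + 1)) :=
    Int.gcd_pos_iff.mpr (Or.inr (by positivity))
  exact Nat.le_of_dvd hpos hg'
end

section
/- Let N = 2^n with n ≥ 2, let K be an integer with 2 < K ≤ N/2, and let m_0 be odd. Define m_u = 2u + m_0 for u = 0,...,K−1. Set m = ⌈log₂ K⌉ − 1. Then max_{u≠v} gcd(m_u − m_v, N) = 2^{m+1}, and the number of pairs (u,v) with u < v achieving gcd(m_u − m_v, N) = 2^{m+1} is exactly Q = K − 2^m. -/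
open Finset

/-- For the arithmetic root allocation `m_u = 2u + m₀` (`m₀` odd), the maximum of
`gcd(m_u − m_v, N)` over pairs `u ≠ v` equals `2^(m+1)` where `m = ⌈log₂ K⌉ − 1`, and the
number of pairs `u < v` attaining it is exactly `Q = K − 2^m`. -/
theorem arithmetic_allocation_gcd (n K : ℕ) (hn : 2 ≤ n) (hK : 2 < K)
    (hKN : K ≤ 2 ^ n / 2) (m₀ : ℤ) (hm₀ : Odd m₀) :
    let r : ℕ → ℤ := fun u => 2 * u + m₀
    let mm : ℕ := Nat.clog 2 K - 1
    (∀ u v : ℕ, u < K → v < K → u ≠ v → Int.gcd (r u - r v) (2 ^ n) ≤ 2 ^ (mm + 1)) ∧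
    (∃ u v : ℕ, u < K ∧ v < K ∧ u ≠ v ∧ Int.gcd (r u - r v) (2 ^ n) = 2 ^ (mm + 1)) ∧
    ((Finset.range K ×ˢ Finset.range K).filter
        (fun p => p.1 < p.2 ∧ Int.gcd (r p.1 - r p.2) (2 ^ n) = 2 ^ (mm + 1))).card
      = K - 2 ^ mm := by
  intro r mm
  have hrdef : ∀ u : ℕ, r u = 2 * u + m₀ := fun _ => rfl
  have hmmdef : mm = Nat.clog 2 K - 1 := rfl
  have hclog : 1 < Nat.clog 2 K :=
    (Nat.lt_clog_iff_pow_lt one_lt_two).mpr (by simpa using hK)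
  have hmm1 : mm + 1 = Nat.clog 2 K := by omega
  have hK2 : 2 ^ mm < K := by
    have := Nat.pow_pred_clog_lt_self one_lt_two (show 1 < K by omega)
    rwa [hmmdef]
  have hK3 : K ≤ 2 ^ (mm + 1) := by
    have := Nat.le_pow_clog one_lt_two K
    rwa [hmm1]
  have hKn1 : K ≤ 2 ^ (n - 1) := by
    have h1 : 2 ^ n = 2 ^ (n - 1) * 2 := by
      rw [← pow_succ]; congr 1; omega
    rw [h1] at hKN
    simpa using hKN
  have hmn : mm + 1 ≤ n := by
    have : 2 ^ mm < 2 ^ (n - 1) := lt_of_lt_of_le hK2 hKn1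
    have := (Nat.pow_lt_pow_iff_right one_lt_two).mp this
    omega
  -- core arithmetic facts about gcd(2d, 2^n)
  have hub : ∀ d : ℕ, 0 < d → d < K → Nat.gcd (2 * d) (2 ^ n) ≤ 2 ^ (mm + 1) := by
    intro d hd hdK
    obtain ⟨k, hk, hkeq⟩ := (Nat.dvd_prime_pow Nat.prime_two).mp
      (Nat.gcd_dvd_right (2 * d) (2 ^ n))
    have hle : Nat.gcd (2 * d) (2 ^ n) ≤ 2 * d :=
      Nat.le_of_dvd (by omega) (Nat.gcd_dvd_left _ _)
    have h1 : 2 * d < 2 ^ (mm + 2) := by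
      have hd2 : d < 2 ^ (mm + 1) := lt_of_lt_of_le hdK hK3
      have : 2 ^ (mm + 2) = 2 * 2 ^ (mm + 1) := by ring
      omega
    have h2 : 2 ^ k < 2 ^ (mm + 2) := by omega
    have hk2 : k < mm + 2 := (Nat.pow_lt_pow_iff_right one_lt_two).mp h2
    have : (2:ℕ) ^ k ≤ 2 ^ (mm + 1) :=
      Nat.pow_le_pow_right (by norm_num) (by omega)
    omega
  have hiff : ∀ d : ℕ, 0 < d → d < K →
      (Nat.gcd (2 * d) (2 ^ n) = 2 ^ (mm + 1) ↔ d = 2 ^ mm) := by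
    intro d hd hdK
    constructor
    · intro h
      have hdvd : 2 ^ (mm + 1) ∣ 2 * d := h ▸ Nat.gcd_dvd_left _ _
      have hdvd' : 2 ^ mm ∣ d := by
        have h1 : 2 ^ mm * 2 ∣ d * 2 := by
          rw [← pow_succ, mul_comm d 2]; exact hdvd
        exact (Nat.mul_dvd_mul_iff_right (by norm_num : (0:ℕ) < 2)).mp h1
      obtain ⟨t, ht⟩ := hdvd'
      have hd2 : d < 2 ^ (mm + 1) := lt_of_lt_of_le hdK hK3
      have hp : 2 ^ (mm + 1) = 2 ^ mm * 2 := by ring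
      have ht2 : t < 2 := by
        by_contra hc
        push_neg at hc
        have : 2 ^ mm * 2 ≤ 2 ^ mm * t := Nat.mul_le_mul_left _ hc
        omega
      have ht1 : 1 ≤ t := by
        rcases Nat.eq_zero_or_pos t with h0 | h0
        · subst h0; simp at ht; omega
        · exact h0
      have ht3 : t = 1 := by omega
      subst ht3
      simpa using ht
    · intro h
      subst h
      have h1 : 2 * 2 ^ mm = 2 ^ (mm + 1) := by ring
      rw [h1]
      exact Nat.gcd_eq_left (pow_dvd_pow 2 hmn)
  -- bridge from Int.gcd to Nat.gcd
  have bridge : ∀ u v : ℕ, u < v →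
      Int.gcd (r u - r v) (2 ^ n) = Nat.gcd (2 * (v - u)) (2 ^ n) := by
    intro u v huv
    have h1 : r u - r v = -(((2 * (v - u) : ℕ) : ℤ)) := by
      rw [hrdef, hrdef]
      push_cast
      omega
    rw [h1, Int.gcd, Int.natAbs_neg]
    simp [Int.natAbs_mul, Int.natAbs_pow]
  have bridge' : ∀ u v : ℕ, u ≠ v →
      Int.gcd (r u - r v) (2 ^ n) =
        Nat.gcd (2 * (max u v - min u v)) (2 ^ n) := by
    intro u v huv
    rcases lt_or_gt_of_ne huv with h | h
    · rw [bridge u v h]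
      congr 2
      omega
    · have : r u - r v = -(r v - r u) := by ring
      rw [this, Int.neg_gcd, bridge v u h]
      congr 2
      omega
  refine ⟨?_, ?_, ?_⟩
  · -- upper bound
    intro u v hu hv huv
    rw [bridge' u v huv]
    exact hub _ (by omega) (by omega)
  · -- attained
    have hp : 0 < 2 ^ mm := pow_pos (by norm_num) mm
    refine ⟨0, 2 ^ mm, by omega, hK2, by omega, ?_⟩
    rw [bridge 0 (2 ^ mm) hp]
    have h2 : 2 ^ mm - 0 = 2 ^ mm := by omega
    rw [h2]
    exact (hiff (2 ^ mm) hp (by omega)).mpr rfl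
  · -- count
    have hset : ((Finset.range K ×ˢ Finset.range K).filter
        (fun p => p.1 < p.2 ∧ Int.gcd (r p.1 - r p.2) (2 ^ n) = 2 ^ (mm + 1)))
        = (Finset.range (K - 2 ^ mm)).image (fun u => (u, u + 2 ^ mm)) := by
      ext ⟨u, v⟩
      simp only [Finset.mem_filter, Finset.mem_product, Finset.mem_range,
        Finset.mem_image, Prod.mk.injEq]
      constructor
      · rintro ⟨⟨hu, hv⟩, huv, hg⟩
        rw [bridge u v huv] at hg
        have hd := (hiff (v - u) (by omega) (by omega)).mp hg
        exact ⟨u, by omega, rfl, by omega⟩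
      · rintro ⟨a, ha, rfl, rfl⟩
        have hp : 0 < 2 ^ mm := pow_pos (by norm_num) mm
        have h1 : a < a + 2 ^ mm := by omega
        refine ⟨⟨by omega, by omega⟩, h1, ?_⟩
        rw [bridge a (a + 2 ^ mm) h1]
        have h2 : a + 2 ^ mm - a = 2 ^ mm := by omega
        rw [h2]
        exact (hiff (2 ^ mm) hp (by omega)).mpr rfl
    rw [hset, Finset.card_image_of_injective, Finset.card_range]
    intro a b hab
    simpa using hab
end

section
/- Let N = 2^n with n ≥ 2 and K with 2 < K ≤ N/2, and set m = ⌈log₂ K⌉ − 1 and Q = K − 2^m. For any choice of K distinct odd integers m_0,...,m_{K−1} in [1, N−1] satisfying max_{u≠v} gcd(m_u − m_v, N) = 2^{m+1}, the number of pairs (u,v), u < v, with gcd(m_u − m_v, N) = 2^{m+1} is at least Q. Consequently the arithmetic allocation m_u = 2u + m_0 (m_0 odd) simultaneously minimizes the maximum gcd and the number of pairs attaining it. -/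
open Finset

/-- Any allocation of `K` distinct odd roots in `[1, N−1]` whose maximum pairwise
`gcd(m_u − m_v, N)` equals `2^(m+1)` (with `m = ⌈log₂ K⌉ − 1`) has at least `Q = K − 2^m`
pairs `u < v` attaining this maximum. Hence the arithmetic allocation is optimal in both
criteria. -/
theorem min_number_of_maximal_pairs (n K : ℕ) (hn : 2 ≤ n) (hK : 2 < K)
    (hKN : K ≤ 2 ^ n / 2) (m : Fin K → ℤ) (hodd : ∀ u, Odd (m u))
    (hrange : ∀ u, 1 ≤ m u ∧ m u ≤ 2 ^ n - 1) (hinj : Function.Injective m)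
    (hmaxle : ∀ u v : Fin K, u ≠ v →
      Int.gcd (m u - m v) (2 ^ n) ≤ 2 ^ (Nat.clog 2 K - 1 + 1))
    (hmaxeq : ∃ u v : Fin K, u ≠ v ∧
      Int.gcd (m u - m v) (2 ^ n) = 2 ^ (Nat.clog 2 K - 1 + 1)) :
    K - 2 ^ (Nat.clog 2 K - 1) ≤
      (Finset.univ.filter (fun p : Fin K × Fin K => p.1 < p.2 ∧
        Int.gcd (m p.1 - m p.2) (2 ^ n) = 2 ^ (Nat.clog 2 K - 1 + 1))).card := by
  classical
  set M := Nat.clog 2 K - 1 with hM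
  set T : ℤ := 2 ^ (M + 1) with hT
  have hT0 : (0:ℤ) < T := by positivity
  have hclog1 : 1 ≤ Nat.clog 2 K := by
    have := Nat.clog_pos (b := 2) (by norm_num) (by omega : 2 ≤ K)
    omega
  have hMn : M + 1 ≤ n := by
    have h1 : K ≤ 2 ^ (n - 1) := by
      have : 2 ^ n = 2 ^ (n - 1) * 2 := by
        rw [← pow_succ]; congr 1; omega
      omega
    have h2 : Nat.clog 2 K ≤ Nat.clog 2 (2 ^ (n - 1)) := Nat.clog_mono_right 2 h1
    rw [Nat.clog_pow 2 _ (by norm_num)] at h2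
    omega
  set f : Fin K → ℤ := fun u => m u % T with hf
  have h2T : (2:ℤ) ∣ T := ⟨2 ^ M, by rw [hT, pow_succ]; ring⟩
  have hfodd : ∀ u, Odd (f u) := by
    intro u
    rw [Int.odd_iff]
    have h := Int.emod_emod_of_dvd (m u) h2T
    show m u % T % 2 = 1
    rw [h, ← Int.odd_iff]
    exact hodd u
  have hfrange : ∀ u, 0 ≤ f u ∧ f u < T := fun u =>
    ⟨Int.emod_nonneg _ (ne_of_gt hT0), Int.emod_lt_of_pos _ hT0⟩
  have hfib : ∀ u : Fin K, u ∈ univ.filter (fun v => f v = f u) := fun u => by simp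
  set rep : Fin K → Fin K := fun u =>
    (univ.filter (fun v => f v = f u)).min' ⟨u, hfib u⟩ with hrep
  have hrep_mem : ∀ u, rep u ∈ univ.filter (fun v => f v = f u) := fun u =>
    Finset.min'_mem _ _
  have hrep_f : ∀ u, f (rep u) = f u := fun u => (Finset.mem_filter.1 (hrep_mem u)).2
  have hrep_le : ∀ u, rep u ≤ u := fun u => Finset.min'_le _ _ (hfib u)
  have hrep_eq : ∀ u v, f u = f v → rep u = rep v := by
    intro u v huv
    simp only [hrep, huv]
  set R : Finset (Fin K) := univ.image rep with hR
  have hRim : R.card ≤ (univ.image f).card := by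
    apply Finset.card_le_card_of_injOn f
    · intro r hr; exact Finset.mem_image_of_mem f (mem_univ r)
    · intro r1 h1 r2 h2 hfr
      rw [hR, Finset.coe_image] at h1 h2
      obtain ⟨u1, _, rfl⟩ := h1
      obtain ⟨u2, _, rfl⟩ := h2
      have e1 : rep (rep u1) = rep u1 := hrep_eq _ _ (hrep_f u1)
      have e2 : rep (rep u2) = rep u2 := hrep_eq _ _ (hrep_f u2)
      calc rep u1 = rep (rep u1) := e1.symm
        _ = rep (rep u2) := hrep_eq _ _ hfr
        _ = rep u2 := e2
  have hcard2 : (univ.image f).card ≤ 2 ^ M := by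
    have hle : (univ.image f).card ≤ (Finset.Ico (0:ℤ) (2 ^ M)).card := by
      apply Finset.card_le_card_of_injOn (fun r => r / 2)
      · intro r hr
        obtain ⟨u, _, rfl⟩ := Finset.mem_image.1 hr
        obtain ⟨h0, hlt⟩ := hfrange u
        rw [Finset.mem_coe, Finset.mem_Ico]
        constructor
        · exact Int.ediv_nonneg h0 (by norm_num)
        · have : f u < 2 * 2 ^ M := by
            rw [hT, pow_succ] at hlt; linarith
          dsimp only; omega
      · intro r1 h1 r2 h2 hd
        rw [Finset.coe_image] at h1 h2
        obtain ⟨u1, _, rfl⟩ := h1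
        obtain ⟨u2, _, rfl⟩ := h2
        have o1 := Int.odd_iff.1 (hfodd u1)
        have o2 := Int.odd_iff.1 (hfodd u2)
        have e1 := Int.mul_ediv_add_emod (f u1) 2
        have e2 := Int.mul_ediv_add_emod (f u2) 2
        simp only at hd
        omega
    have hc : (Finset.Ico (0:ℤ) (2 ^ M)).card = 2 ^ M := by
      rw [Int.card_Ico, sub_zero,
        show ((2:ℤ) ^ M) = ((2 ^ M : ℕ) : ℤ) by push_cast; ring, Int.toNat_natCast]
    rwa [hc] at hle
  have hRcard : R.card ≤ 2 ^ M := hRim.trans hcard2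
  set S := Finset.univ.filter (fun p : Fin K × Fin K => p.1 < p.2 ∧
        Int.gcd (m p.1 - m p.2) (2 ^ n) = 2 ^ (M + 1)) with hS
  have hmain : (univ \ R).card ≤ S.card := by
    apply Finset.card_le_card_of_injOn (fun u => (rep u, u))
    · intro u hu
      rw [Finset.mem_coe, Finset.mem_sdiff] at hu
      have hru : rep u ∈ R := Finset.mem_image_of_mem rep (mem_univ u)
      have hne : rep u ≠ u := fun h => hu.2 (h ▸ hru)
      have hlt : rep u < u := lt_of_le_of_ne (hrep_le u) hne
      rw [hS, Finset.mem_coe, Finset.mem_filter]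
      refine ⟨mem_univ _, hlt, ?_⟩
      show Int.gcd (m (rep u) - m u) (2 ^ n) = 2 ^ (M + 1)
      have hmod : Int.ModEq T (m (rep u)) (m u) := hrep_f u
      have hdvd' : T ∣ m (rep u) - m u := dvd_sub_comm.mp hmod.dvd
      have hdvdN : T ∣ (2:ℤ) ^ n := by
        rw [hT]; exact pow_dvd_pow 2 hMn
      have hgd : T ∣ (Int.gcd (m (rep u) - m u) (2 ^ n) : ℤ) :=
        Int.dvd_coe_gcd hdvd' hdvdN
      have hgpos : 0 < Int.gcd (m (rep u) - m u) (2 ^ n) := by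
        apply Int.gcd_pos_of_ne_zero_right
        positivity
      have hgle := hmaxle (rep u) u hne
      have hTnat : T = ((2 ^ (M + 1) : ℕ) : ℤ) := by push_cast [hT]; ring
      rw [hTnat] at hgd
      have hdn : (2 ^ (M + 1) : ℕ) ∣ Int.gcd (m (rep u) - m u) (2 ^ n) :=
        Int.ofNat_dvd.1 hgd
      exact le_antisymm hgle (Nat.le_of_dvd hgpos hdn)
    · intro u1 _ u2 _ h
      simpa using congrArg Prod.snd h
  have hsd : (univ \ R).card = K - R.card := by
    rw [Finset.card_sdiff_of_subset (Finset.subset_univ R)]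
    simp
  calc K - 2 ^ M ≤ K - R.card := Nat.sub_le_sub_left hRcard K
    _ = (univ \ R).card := hsd.symm
    _ ≤ S.card := hmain
end

section
/- Let N, M, Q be positive integers with 2Q ≤ M, and suppose a_s(t) is a square-root Nyquist pulse for symbol interval τ_r supported on [−Qτ_r, Qτ_r], meaning ∫ a_s*(t − lτ_r) a_s(t) dt = δ[l] for |l| ≤ 2Q. Define T = Mτ_r and g(t) = (1/√N)·Σ_{n=0}^{N−1} a_s(t − nT). Then g satisfies the delay-Doppler orthogonality A_{g,g}(lτ_r, kν_r) = ∫ g*(t − lτ_r) g(t) e^{−j2πkν_r(t − lτ_r)} dt = δ[l]δ[k] for all |l| ≤ M − 2Q and |k| ≤ N − 1, where ν_r = 1/(NMτ_r). -/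
open Complex MeasureTheory

set_option maxHeartbeats 1600000 in
/-- The DDOP `g(t) = (1/√N) Σ_{n<N} a_s(t − nT)` built from a time-limited square-root
Nyquist pulse `a_s` satisfies the delay-Doppler orthogonality
`A_{g,g}(lτ_r, kν_r) = δ[l]δ[k]` for `|l| ≤ M − 2Q`, `|k| ≤ N − 1`. -/
theorem ddop_orthogonality (N M Q : ℕ) (hN : 0 < N) (hM : 0 < M) (hQ : 0 < Q)
    (hQM : 2 * Q ≤ M) (τ : ℝ) (hτ : 0 < τ) (a : ℝ → ℂ)
    (hsupp : ∀ t : ℝ, t ∉ Set.Icc (-(Q : ℝ) * τ) ((Q : ℝ) * τ) → a t = 0)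
    (hnyq : ∀ l : ℤ, |l| ≤ 2 * (Q : ℤ) →
      (∫ t : ℝ, (starRingEnd ℂ) (a (t - (l : ℝ) * τ)) * a t) =
        if l = 0 then 1 else 0) :
    let T : ℝ := (M : ℝ) * τ
    let ν : ℝ := 1 / ((N : ℝ) * (M : ℝ) * τ)
    let g : ℝ → ℂ := fun t => (1 / Real.sqrt N : ℝ) * ∑ nn ∈ Finset.range N, a (t - nn * T)
    ∀ l k : ℤ, |l| ≤ (M : ℤ) - 2 * Q → |k| ≤ (N : ℤ) - 1 →
      (∫ t : ℝ, (starRingEnd ℂ) (g (t - (l : ℝ) * τ)) * g t *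
          Complex.exp (-(2 * (Real.pi : ℂ) * Complex.I * (k : ℂ) * ((ν : ℝ) : ℂ) *
            (((t : ℝ) : ℂ) - (l : ℝ) * τ)))) =
        if l = 0 ∧ k = 0 then 1 else 0 := by
  intro T ν g l k hl hk
  have hT : T = (M : ℝ) * τ := rfl
  have hν : ν = 1 / ((N : ℝ) * (M : ℝ) * τ) := rfl
  have hg : g = fun t => ((1 / Real.sqrt N : ℝ) : ℂ) * ∑ nn ∈ Finset.range N, a (t - nn * T) := rfl
  have hτ' : τ ≠ 0 := ne_of_gt hτ
  have hNR : (N : ℝ) ≠ 0 := Nat.cast_ne_zero.mpr hN.ne'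
  have hMR : (M : ℝ) ≠ 0 := Nat.cast_ne_zero.mpr hM.ne'
  have hNC : (N : ℂ) ≠ 0 := Nat.cast_ne_zero.mpr hN.ne'
  have hνT : ν * T = 1 / (N : ℝ) := by
    rw [hν, hT]; field_simp
  -- the pulse correlation function
  set h : ℝ → ℂ := fun u => (starRingEnd ℂ) (a (u - (l : ℝ) * τ)) * a u with hh
  -- the Doppler phase
  set E : ℝ → ℂ := fun t =>
    Complex.exp (((-(2 * Real.pi * (k : ℝ) * ν * (t - (l : ℝ) * τ)) : ℝ) : ℂ) * Complex.I) with hE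
  have hEcont : Continuous E := by fun_prop
  have hEmeas : AEStronglyMeasurable E volume := hEcont.aestronglyMeasurable
  have hEnorm : ∀ t, ‖E t‖ ≤ 1 := by
    intro t
    simp only [hE, Complex.norm_exp_ofReal_mul_I, le_refl]
  -- support of a
  have hsupp' : ∀ u : ℝ, a u ≠ 0 → |u| ≤ (Q : ℝ) * τ := by
    intro u hu
    have hmem : u ∈ Set.Icc (-(Q : ℝ) * τ) ((Q : ℝ) * τ) := by
      by_contra hmem; exact hu (hsupp u hmem)
    rw [Set.mem_Icc] at hmem
    rw [abs_le]
    constructor <;> [linarith [hmem.1]; linarith [hmem.2]]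
  have hsupph : ∀ u : ℝ, h u ≠ 0 → |u| ≤ (Q : ℝ) * τ := by
    intro u hu
    apply hsupp'
    intro h0
    apply hu
    rw [hh]; simp [h0]
  -- main a.e. reduction: integrand equals F a.e.
  set F : ℝ → ℂ := fun t => (N : ℂ)⁻¹ * ((∑ n ∈ Finset.range N, h (t - n * T)) * E t) with hF
  have key : (∫ t : ℝ, (starRingEnd ℂ) (g (t - (l : ℝ) * τ)) * g t *
          Complex.exp (-(2 * (Real.pi : ℂ) * Complex.I * (k : ℂ) * ((ν : ℝ) : ℂ) *
            (((t : ℝ) : ℂ) - (l : ℝ) * τ)))) = ∫ t : ℝ, F t := by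
    set B : Set ℝ := ⋃ n ∈ Finset.range N,
      ({(l : ℝ) * τ + n * T - Q * τ, (l : ℝ) * τ + n * T + Q * τ} : Set ℝ) with hB
    have hBnull : volume B = 0 := by
      exact Set.Finite.measure_zero
        (Set.Finite.biUnion (Finset.finite_toSet _) fun i _ => Set.toFinite _) _
    have haeB : ∀ᵐ t : ℝ, t ∉ B := measure_eq_zero_iff_ae_notMem.mp hBnull
    apply integral_congr_ae
    filter_upwards [haeB] with t ht
    have hexp : Complex.exp (-(2 * (Real.pi : ℂ) * Complex.I * (k : ℂ) * ((ν : ℝ) : ℂ) *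
            (((t : ℝ) : ℂ) - (l : ℝ) * τ))) = E t := by
      rw [hE]; push_cast; ring_nf
    set c : ℂ := ((1 / Real.sqrt N : ℝ) : ℂ) with hc
    have hcc : c * c = (N : ℂ)⁻¹ := by
      rw [hc, ← Complex.ofReal_mul]
      have : (1 / Real.sqrt N) * (1 / Real.sqrt N) = (N : ℝ)⁻¹ := by
        rw [div_mul_div_comm, Real.mul_self_sqrt (Nat.cast_nonneg N), one_mul, one_div]
      rw [this]
      push_cast
      ring
    have hconj : (starRingEnd ℂ) (g (t - (l : ℝ) * τ)) =
        c * ∑ n' ∈ Finset.range N, (starRingEnd ℂ) (a (t - (l : ℝ) * τ - n' * T)) := by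
      rw [hg]
      simp only [map_mul, map_sum]
      rw [hc, Complex.conj_ofReal]
    have hdiag : (∑ n' ∈ Finset.range N, (starRingEnd ℂ) (a (t - (l : ℝ) * τ - n' * T))) *
        (∑ n ∈ Finset.range N, a (t - n * T)) = ∑ n ∈ Finset.range N, h (t - n * T) := by
      rw [Finset.sum_mul_sum]
      apply Finset.sum_congr rfl
      intro n' hn'
      rw [Finset.sum_eq_single_of_mem n' hn' ?_]
      · rw [hh]
        have : t - (l : ℝ) * τ - n' * T = t - n' * T - (l : ℝ) * τ := by ring
        rw [this]
      · intro n hn hne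
        by_contra hprod
        have ha1 : a (t - (l : ℝ) * τ - n' * T) ≠ 0 := by
          intro h0; exact hprod (by rw [h0]; simp)
        have ha2 : a (t - n * T) ≠ 0 := by
          intro h0; exact hprod (by rw [h0]; simp)
        have hb1 : |t - n * T| ≤ (Q : ℝ) * τ := hsupp' _ ha2
        have hb2 : |t - (l : ℝ) * τ - n' * T| ≤ (Q : ℝ) * τ := hsupp' _ ha1
        -- strictness from t ∉ B
        simp only [hB, Set.mem_iUnion, Finset.mem_coe, Finset.mem_range, Set.mem_insert_iff,
          Set.mem_singleton_iff, not_exists, not_or] at ht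
        have htn := ht n' (Finset.mem_range.mp hn')
        have hb2s : |t - (l : ℝ) * τ - n' * T| < (Q : ℝ) * τ := by
          rcases lt_or_eq_of_le hb2 with h' | h'
          · exact h'
          · exfalso
            rcases abs_eq (by positivity : (0:ℝ) ≤ (Q : ℝ) * τ) |>.mp h' with h'' | h''
            · exact htn.2 (by linarith)
            · exact htn.1 (by linarith)
        set d : ℤ := (n' : ℤ) - n with hd
        have hdne : d ≠ 0 := by
          rw [hd]; intro h0
          exact hne (by exact_mod_cast (sub_eq_zero.mp h0).symm)
        have hge : 2 * (Q : ℤ) ≤ |l + d * M| := by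
          have h1 : (1 : ℤ) ≤ |d| := Int.one_le_abs hdne
          have h2 : (M : ℤ) ≤ |d| * M := le_mul_of_one_le_left (by positivity) h1
          have h3 : |d * M| = |d| * M := by
            rw [abs_mul, abs_of_nonneg (by positivity : (0:ℤ) ≤ (M:ℤ))]
          have h4 : |d * M| - |l| ≤ |l + d * M| := by
            have h5 := abs_sub_abs_le_abs_sub (d * M) (-l)
            rw [abs_neg, sub_neg_eq_add, add_comm] at h5
            exact h5
          linarith [hl]
        have e1 : ((l + d * M : ℤ) : ℝ) * τ = (t - n * T) - (t - (l : ℝ) * τ - n' * T) := by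
          rw [hT]; push_cast [hd]; ring
        have e2 : |((l + d * M : ℤ) : ℝ)| * τ < 2 * (Q : ℝ) * τ := by
          have h6 : |((l + d * M : ℤ) : ℝ) * τ| < 2 * ((Q : ℝ) * τ) := by
            rw [e1]
            calc |(t - n * T) - (t - (l : ℝ) * τ - n' * T)|
                ≤ |t - n * T| + |t - (l : ℝ) * τ - n' * T| := abs_sub _ _
              _ < 2 * ((Q : ℝ) * τ) := by linarith
          rw [abs_mul, abs_of_pos hτ] at h6
          linarith
        have e3 : |l + d * M| < 2 * (Q : ℤ) := by
          have h7 : |((l + d * M : ℤ) : ℝ)| < 2 * (Q : ℝ) := by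
            have := mul_lt_mul_of_pos_right (lt_of_mul_lt_mul_right e2 (le_of_lt hτ)) hτ
            nlinarith [e2, hτ]
          rw [← Int.cast_abs] at h7
          exact_mod_cast h7
        omega
    calc (starRingEnd ℂ) (g (t - (l : ℝ) * τ)) * g t *
          Complex.exp (-(2 * (Real.pi : ℂ) * Complex.I * (k : ℂ) * ((ν : ℝ) : ℂ) *
            (((t : ℝ) : ℂ) - (l : ℝ) * τ)))
        = (c * ∑ n' ∈ Finset.range N, (starRingEnd ℂ) (a (t - (l : ℝ) * τ - n' * T))) *
          (c * ∑ n ∈ Finset.range N, a (t - n * T)) * E t := by rw [hconj, hexp, hg]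
      _ = (c * c) * (((∑ n' ∈ Finset.range N, (starRingEnd ℂ) (a (t - (l : ℝ) * τ - n' * T))) *
          (∑ n ∈ Finset.range N, a (t - n * T))) * E t) := by ring
      _ = F t := by rw [hcc, hdiag, hF]
  rw [key]
  by_cases hl2 : |l| ≤ 2 * (Q : ℤ)
  · by_cases hint : Integrable h volume
    · -- main computation
      set ω : ℂ := Complex.exp (((-(2 * Real.pi * (k : ℝ) * ν * T) : ℝ) : ℂ) * Complex.I)
        with hω
      have hEshift : ∀ (n : ℕ) (u : ℝ), E (u + n * T) = E u * ω ^ n := by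
        intro n u
        show Complex.exp
            (((-(2 * Real.pi * (k : ℝ) * ν * (u + n * T - (l : ℝ) * τ)) : ℝ) : ℂ) * Complex.I)
          = Complex.exp
            (((-(2 * Real.pi * (k : ℝ) * ν * (u - (l : ℝ) * τ)) : ℝ) : ℂ) * Complex.I) * ω ^ n
        rw [hω, ← Complex.exp_nat_mul, ← Complex.exp_add]
        congr 1
        push_cast
        ring
      have hterm : ∀ n : ℕ, (∫ t : ℝ, h (t - n * T) * E t) = (∫ u : ℝ, h u * E u) * ω ^ n := by
        intro n
        have heq : (fun t : ℝ => h (t - n * T) * E t) =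
            fun t : ℝ => (fun u => h u * E (u + n * T)) (t - n * T) := by
          funext t; simp
        rw [heq, integral_sub_right_eq_self (fun u => h u * E (u + n * T)) ((n : ℝ) * T)]
        simp only [hEshift]
        rw [← integral_mul_const]
        congr 1; funext u; ring
      have hintn : ∀ n ∈ Finset.range N,
          Integrable (fun t : ℝ => (N : ℂ)⁻¹ * (h (t - n * T) * E t)) volume := by
        intro n _
        apply Integrable.const_mul
        have h1 : Integrable (fun t : ℝ => E t * h (t - n * T)) volume :=
          (hint.comp_sub_right ((n : ℝ) * T)).bdd_mul hEmeas (Filter.Eventually.of_forall hEnorm)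
        exact h1.congr (Filter.Eventually.of_forall fun t => mul_comm _ _)
      have hsplit : (∫ t : ℝ, F t) =
          ∑ n ∈ Finset.range N, ∫ t : ℝ, (N : ℂ)⁻¹ * (h (t - n * T) * E t) := by
        rw [← integral_finset_sum _ hintn]
        congr 1; funext t
        rw [hF]
        simp only [Finset.sum_mul, Finset.mul_sum]
      have hJ : ∀ n ∈ Finset.range N, (∫ t : ℝ, (N : ℂ)⁻¹ * (h (t - n * T) * E t)) =
          (N : ℂ)⁻¹ * ((∫ u : ℝ, h u * E u) * ω ^ n) := by
        intro n _
        rw [integral_const_mul, hterm n]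
      rw [hsplit, Finset.sum_congr rfl hJ, ← Finset.mul_sum, ← Finset.mul_sum]
      by_cases hk0 : k = 0
      · subst hk0
        have hω1 : ω = 1 := by rw [hω]; norm_num
        have hE1 : ∀ u : ℝ, E u = 1 := by intro u; rw [hE]; norm_num
        have hJ0 : (∫ u : ℝ, h u * E u) = if l = 0 then 1 else 0 := by
          rw [show (fun u : ℝ => h u * E u) = h from funext fun u => by rw [hE1, mul_one]]
          simp only [hh]
          exact hnyq l hl2
        rw [hJ0, hω1]
        simp only [one_pow, Finset.sum_const, Finset.card_range, nsmul_eq_mul, mul_one,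
          and_true]
        split_ifs with h0
        · field_simp
        · simp
      · have hωN : ω ^ N = 1 := by
          rw [hω, ← Complex.exp_nat_mul]
          have hr : (N : ℝ) * (-(2 * Real.pi * (k : ℝ) * ν * T)) = (-k : ℝ) * (2 * Real.pi) := by
            rw [hν, hT]; field_simp
          have harg : (N : ℂ) * (((-(2 * Real.pi * (k : ℝ) * ν * T) : ℝ) : ℂ) * Complex.I) =
              ((-k : ℤ) : ℂ) * (2 * (Real.pi : ℂ) * Complex.I) := by
            calc (N : ℂ) * (((-(2 * Real.pi * (k : ℝ) * ν * T) : ℝ) : ℂ) * Complex.I)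
                = (((N : ℝ) * (-(2 * Real.pi * (k : ℝ) * ν * T)) : ℝ) : ℂ) * Complex.I := by
                  push_cast; ring
              _ = (((-k : ℝ) * (2 * Real.pi) : ℝ) : ℂ) * Complex.I := by rw [hr]
              _ = ((-k : ℤ) : ℂ) * (2 * (Real.pi : ℂ) * Complex.I) := by push_cast; ring
          rw [harg, Complex.exp_int_mul_two_pi_mul_I]
        have hω1 : ω ≠ 1 := by
          rw [hω]
          intro hcon
          rcases Complex.exp_eq_one_iff.mp hcon with ⟨m, hm⟩
          have hm2 : ((m : ℂ)) * (2 * (Real.pi : ℂ) * Complex.I) =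
              (((m * (2 * Real.pi)) : ℝ) : ℂ) * Complex.I := by push_cast; ring
          rw [hm2] at hm
          have hreq : (-(2 * Real.pi * (k : ℝ) * ν * T) : ℝ) = m * (2 * Real.pi) := by
            have := mul_right_cancel₀ Complex.I_ne_zero hm
            exact_mod_cast this
          have hassoc : 2 * Real.pi * (k : ℝ) * ν * T = 2 * Real.pi * (k : ℝ) * (ν * T) := by
            ring
          rw [hassoc, hνT] at hreq
          have hπ : Real.pi ≠ 0 := Real.pi_ne_zero
          have hk' : (k : ℝ) = -(m * N) := by
            field_simp at hreq
            nlinarith [hreq, Real.pi_pos]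
          have hkZ : k = -(m * N) := by exact_mod_cast hk'
          have hm0 : m ≠ 0 := by
            rintro rfl
            simp at hkZ
            exact hk0 hkZ
          have hNle : (N : ℤ) ≤ |k| := by
            rw [hkZ, abs_neg, abs_mul]
            have h1 : 1 ≤ |m| := Int.one_le_abs hm0
            have h2 : |(N : ℤ)| = (N : ℤ) := abs_of_nonneg (by positivity)
            nlinarith [h1, h2, Int.natCast_nonneg N]
          omega
        rw [geom_sum_eq hω1, hωN]
        simp [hk0]
    · -- non-integrable case: l ≠ 0, show F non-integrable
      have hl0 : l ≠ 0 := by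
        rintro rfl
        apply hint
        by_contra hc
        have h1 : (∫ u : ℝ, h u) = if (0 : ℤ) = 0 then 1 else 0 := hnyq 0 (by simp)
        rw [MeasureTheory.integral_undef hc] at h1
        simp at h1
      rw [if_neg (by tauto)]
      apply integral_undef
      intro hF_int
      apply hint
      set E' : ℝ → ℂ := fun t =>
        Complex.exp ((((2 * Real.pi * (k : ℝ) * ν * (t - (l : ℝ) * τ)) : ℝ) : ℂ) * Complex.I)
        with hE'
      have hE'cont : Continuous E' := by fun_prop
      have hE'meas : AEStronglyMeasurable E' volume := hE'cont.aestronglyMeasurable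
      have hE'norm : ∀ t, ‖E' t‖ ≤ 1 := by
        intro t
        simp only [hE', Complex.norm_exp_ofReal_mul_I, le_refl]
      have hEE' : ∀ t, E t * E' t = 1 := by
        intro t
        rw [hE, hE']
        simp only
        rw [← Complex.exp_add,
          show ((-(2 * Real.pi * (k : ℝ) * ν * (t - (l : ℝ) * τ)) : ℝ) : ℂ) * Complex.I +
              (((2 * Real.pi * (k : ℝ) * ν * (t - (l : ℝ) * τ)) : ℝ) : ℂ) * Complex.I = 0 from by
            push_cast; ring,
          Complex.exp_zero]
      set G : ℝ → ℂ := fun t => ∑ n ∈ Finset.range N, h (t - n * T) with hG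
      have hGint : Integrable G volume := by
        have h1 : Integrable (fun t => E' t * ((N : ℂ) * F t)) volume :=
          (hF_int.const_mul (N : ℂ)).bdd_mul hE'meas (Filter.Eventually.of_forall hE'norm)
        apply h1.congr
        apply Filter.Eventually.of_forall
        intro t
        have hFt : F t = (N : ℂ)⁻¹ * (G t * E t) := rfl
        show E' t * ((N : ℂ) * F t) = G t
        rw [hFt]
        calc E' t * ((N : ℂ) * ((N : ℂ)⁻¹ * (G t * E t)))
            = ((N : ℂ) * (N : ℂ)⁻¹) * (G t * (E t * E' t)) := by ring
          _ = G t := by rw [mul_inv_cancel₀ hNC, hEE' t, one_mul, mul_one]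
      have hTpos : 0 < T := by rw [hT]; positivity
      have hT2Q : 2 * (Q : ℝ) * τ ≤ T := by
        rw [hT]
        have : (2 * Q : ℝ) ≤ (M : ℝ) := by exact_mod_cast hQM
        nlinarith
      have hind : Set.indicator (Set.Iio ((Q : ℝ) * τ)) G =ᵐ[volume] h := by
        have hsing : ∀ᵐ t : ℝ, t ∉ ({(Q : ℝ) * τ} : Set ℝ) :=
          measure_eq_zero_iff_ae_notMem.mp (measure_singleton _)
        filter_upwards [hsing] with t htne
        rw [Set.mem_singleton_iff] at htne
        rcases lt_trichotomy t ((Q : ℝ) * τ) with hlt | heq | hgt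
        · rw [Set.indicator_of_mem (Set.mem_Iio.mpr hlt), hG]
          simp only
          rw [Finset.sum_eq_single_of_mem 0 (Finset.mem_range.mpr hN) ?_]
          · norm_num
          · intro n hn hne
            by_contra hne0
            have hb := hsupph _ hne0
            rw [abs_le] at hb
            have hn1 : (1 : ℝ) ≤ (n : ℝ) := by exact_mod_cast Nat.one_le_iff_ne_zero.mpr hne
            nlinarith [hb.1, hb.2]
        · exact absurd heq htne
        · rw [Set.indicator_of_notMem (by rw [Set.mem_Iio]; linarith)]
          by_contra hne0
          have hb := hsupph t (fun h0 => hne0 h0.symm)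
          rw [abs_le] at hb
          linarith [hb.2]
      exact (hGint.indicator measurableSet_Iio).congr hind
  · -- |l| > 2Q : h is identically zero
    have hzero : ∀ u, h u = 0 := by
      intro u
      by_contra hu
      have h1 := hsupph u hu
      have h2 : a (u - (l : ℝ) * τ) ≠ 0 := by
        intro h0; apply hu; rw [hh]; simp [h0]
      have h3 := hsupp' _ h2
      have h4 : (2 * Q + 1 : ℝ) ≤ |(l : ℝ)| := by
        have : 2 * (Q : ℤ) + 1 ≤ |l| := by omega
        calc (2 * Q + 1 : ℝ) = ((2 * (Q : ℤ) + 1 : ℤ) : ℝ) := by push_cast; ring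
          _ ≤ ((|l| : ℤ) : ℝ) := by exact_mod_cast this
          _ = |(l : ℝ)| := by push_cast; ring
      have h5 : |(l : ℝ) * τ| - |u| ≤ |u - (l : ℝ) * τ| := by
        have := abs_sub_abs_le_abs_sub ((l : ℝ) * τ) u
        have h6 : |(l:ℝ) * τ - u| = |u - (l:ℝ) * τ| := abs_sub_comm _ _
        linarith
      rw [abs_mul, abs_of_pos hτ] at h5
      nlinarith [h3, h1, h5, hτ]
    have hl0 : l ≠ 0 := by
      intro h0; exact hl2 (by simp [h0])
    rw [if_neg (by tauto)]
    have : F = fun _ => 0 := by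
      funext t; rw [hF]; simp [hzero]
    rw [this, integral_zero]
end

section
/- Let N divide into the chirp analysis as follows: for N = 2^n and odd integers m_u ≠ m_v in [1, N−1], the maximum over all shifts k_u, k_v of |ψ_{u,v}(k_u,k_v)|² equals gcd(m_v − m_u, N)/N, and this maximum is attained (i.e., there exist shifts k_u, k_v with (k_u m_u − k_v m_v) ≡ 0 mod gcd(m_v−m_u, N)). -/
open Complex Finset

noncomputable def ee (n : ℕ) (t : ℤ) : ℂ :=
  Complex.exp (Real.pi * Complex.I * t / ((2 ^ n : ℕ) : ℂ))

lemma ee_add (n : ℕ) (s t : ℤ) : ee n (s + t) = ee n s * ee n t := by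
  rw [ee, ee, ee, ← Complex.exp_add]
  congr 1
  push_cast
  ring

lemma ee_mul_unit (n : ℕ) (t : ℤ) : ee n (2 ^ (n + 1) * t) = 1 := by
  rw [ee]
  have h2 : ((2 ^ n : ℕ) : ℂ) ≠ 0 := by exact_mod_cast (pow_ne_zero n two_ne_zero : (2:ℂ)^n ≠ 0)
  have : (Real.pi : ℂ) * Complex.I * ((2 ^ (n + 1) * t : ℤ) : ℂ) / ((2 ^ n : ℕ) : ℂ)
      = (t : ℂ) * (2 * Real.pi * Complex.I) := by
    field_simp
    push_cast
    ring
  rw [this, Complex.exp_int_mul_two_pi_mul_I]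

lemma ee_congr (n : ℕ) {s t : ℤ} (h : (2 ^ (n + 1) : ℤ) ∣ s - t) : ee n s = ee n t := by
  obtain ⟨m, hm⟩ := h
  have : s = t + 2 ^ (n + 1) * m := by linarith
  rw [this, ee_add, ee_mul_unit, mul_one]

lemma ee_pow (n : ℕ) (t : ℤ) (m : ℕ) : ee n t ^ m = ee n (t * m) := by
  induction m with
  | zero => simp [ee]
  | succ k ih =>
    rw [pow_succ, ih, ← ee_add]
    congr 1
    push_cast
    ring

lemma ee_conj (n : ℕ) (t : ℤ) : (starRingEnd ℂ) (ee n t) = ee n (-t) := by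
  rw [ee, ee, ← Complex.exp_conj]
  congr 1
  simp [map_div₀, Complex.conj_I, map_ofNat]

lemma geom_root (M : ℕ) (w : ℂ) (h : w ^ M = 1) :
    ∑ j ∈ Finset.range M, w ^ j = if w = 1 then (M : ℂ) else 0 := by
  split_ifs with hw
  · simp [hw]
  · rw [geom_sum_eq hw, h]
    simp

lemma ee_eq_one_iff (n : ℕ) (a : ℤ) : ee n (2 * a) = 1 ↔ (2 ^ n : ℤ) ∣ a := by
  constructor
  · intro h
    rw [ee, Complex.exp_eq_one_iff] at h
    obtain ⟨k, hk⟩ := h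
    have h2 : ((2 ^ n : ℕ) : ℂ) ≠ 0 := by
      exact_mod_cast (pow_ne_zero n two_ne_zero : (2:ℂ)^n ≠ 0)
    have hpi : (Real.pi : ℂ) ≠ 0 := by
      exact_mod_cast Real.pi_ne_zero
    have hI : Complex.I ≠ 0 := Complex.I_ne_zero
    have hne : (2 * Real.pi * Complex.I : ℂ) ≠ 0 := by
      simp [hpi, hI]
    have hk' : (2 * Real.pi * Complex.I : ℂ) * a = (2 * Real.pi * Complex.I) * (k * 2 ^ n) := by
      field_simp at hk
      push_cast at hk
      linear_combination (↑Real.pi * Complex.I) * hk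
    have : (a : ℂ) = ((k * 2 ^ n : ℤ) : ℂ) := by
      have := mul_left_cancel₀ hne hk'
      push_cast
      exact this
    have : a = k * 2 ^ n := by exact_mod_cast this
    exact ⟨k, by linarith⟩
  · intro ⟨m, hm⟩
    have : 2 * a = 2 ^ (n + 1) * m := by rw [hm]; ring
    rw [this]
    exact ee_mul_unit n m

lemma sum_shift_one (M : ℕ) (g : ℤ → ℂ) (hg : ∀ k : ℤ, g (k + M) = g k) :
    ∑ k ∈ Finset.range M, g ((k : ℤ) + 1) = ∑ k ∈ Finset.range M, g k := by
  have h1 := Finset.sum_range_succ' (fun k : ℕ => g k) M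
  have h2 := Finset.sum_range_succ (fun k : ℕ => g k) M
  have h3 : g (M : ℤ) = g 0 := by have := hg 0; simpa using this
  have h4 : ∑ k ∈ Finset.range M, g ((k : ℤ) + 1) = ∑ k ∈ Finset.range M, g ((k + 1 : ℕ) : ℤ) := by
    apply Finset.sum_congr rfl; intro x _; congr 1
  rw [h4]
  have := h1.symm.trans h2
  simp only [h3] at this
  exact add_right_cancel (b := g 0) this

lemma sum_shift (M : ℕ) (g : ℤ → ℂ) (hg : ∀ k : ℤ, g (k + M) = g k) (l : ℤ) :
    ∑ k ∈ Finset.range M, g ((k : ℤ) + l) = ∑ k ∈ Finset.range M, g k := by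
  induction l using Int.induction_on with
  | zero => simp
  | succ i ih =>
    have : ∀ k : ℤ, (fun x => g (x + i)) (k + M) = (fun x => g (x + i)) k := by
      intro k; simp only []; rw [add_right_comm, hg]
    have h1 := sum_shift_one M (fun x => g (x + i)) this
    rw [← ih, ← h1]
    apply Finset.sum_congr rfl
    intro x hx
    congr 1
    push_cast
    ring
  | pred i ih =>
    have : ∀ k : ℤ, (fun x => g (x + (-(i+1) : ℤ))) (k + M) = (fun x => g (x + (-(i+1):ℤ))) k := by
      intro k; simp only []; rw [add_right_comm, hg]
    have h1 := sum_shift_one M (fun x => g (x + (-(i+1) : ℤ))) this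
    rw [← ih]
    have e1 : ∑ k ∈ Finset.range M, g ((k : ℤ) + (-(i : ℤ) - 1)) =
        ∑ x ∈ Finset.range M, g ((x : ℤ) + -((i : ℤ) + 1)) := by
      apply Finset.sum_congr rfl; intro x _; congr 1; ring
    have e2 : ∑ x ∈ Finset.range M, g ((x : ℤ) + 1 + -((i : ℤ) + 1)) =
        ∑ k ∈ Finset.range M, g ((k : ℤ) + -(i : ℤ)) := by
      apply Finset.sum_congr rfl; intro x _; congr 1; ring
    calc ∑ k ∈ Finset.range M, g ((k : ℤ) + (-(i:ℤ) - 1))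
        = ∑ x ∈ Finset.range M, g ((x : ℤ) + -((i:ℤ) + 1)) := e1
      _ = ∑ x ∈ Finset.range M, g ((x : ℤ) + 1 + -((i:ℤ) + 1)) := h1.symm
      _ = ∑ k ∈ Finset.range M, g ((k : ℤ) + -(i:ℤ)) := e2

lemma sq_congr (n : ℕ) (hn : 1 ≤ n) {x y : ℤ} (h : (2 ^ n : ℤ) ∣ x - y) :
    (2 ^ (n + 1) : ℤ) ∣ x ^ 2 - y ^ 2 := by
  obtain ⟨m, rfl⟩ : ∃ m, n = m + 1 := ⟨n - 1, (Nat.succ_pred_eq_of_pos hn).symm⟩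
  obtain ⟨q, hq⟩ := h
  have hx : x = y + 2 ^ (m + 1) * q := by linarith
  exact ⟨q * y + 2 ^ m * q ^ 2, by subst hx; ring⟩

-- structural facts about c = gcd(d, 2^n)
lemma gcd_facts (n : ℕ) (hn : 1 ≤ n) (d : ℤ) (hd0 : d ≠ 0) (hdlt : |d| < 2 ^ n) :
    ∃ e : ℕ, (Int.gcd d (2 ^ n)) * (2 * e) = 2 ^ n ∧
      (∀ t : ℤ, (2 ^ n : ℤ) ∣ d * t ↔ ((2 * e : ℕ) : ℤ) ∣ t) ∧ 0 < e := by
  obtain ⟨m, rfl⟩ : ∃ m, n = m + 1 := ⟨n - 1, (Nat.succ_pred_eq_of_pos hn).symm⟩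
  set c : ℕ := Int.gcd d (2 ^ (m + 1)) with hc
  have hcdN : (c : ℤ) ∣ 2 ^ (m + 1) := Int.gcd_dvd_right _ _
  have hcdd : (c : ℤ) ∣ d := Int.gcd_dvd_left _ _
  have hcN : c ∣ 2 ^ (m + 1) := by exact_mod_cast hcdN
  have hc0 : 0 < c := by
    apply Int.gcd_pos_of_ne_zero_right
    positivity
  -- c = 2 ^ k with k ≤ m
  obtain ⟨k, hk, hck⟩ := (Nat.dvd_prime_pow Nat.prime_two).mp hcN
  have hkm : k ≤ m := by
    by_contra hkm
    have : k = m + 1 := le_antisymm hk (not_lt.mp (fun h => hkm (Nat.lt_succ_iff.mp h)))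
    rw [this] at hck
    have h1 : ((2:ℤ)) ^ (m + 1) ∣ d := by rw [hck] at hcdd; exact_mod_cast hcdd
    have h2 : ((2:ℤ)) ^ (m + 1) ≤ |d| :=
      Int.le_of_dvd (abs_pos.mpr hd0) ((dvd_abs _ _).mpr h1)
    linarith
  refine ⟨2 ^ (m - k), ?_, ?_, by positivity⟩
  · rw [hck]
    have h1 : (2:ℕ) ^ k * (2 * 2 ^ (m - k)) = 2 ^ (k + (m - k)) * 2 := by ring
    rw [h1, Nat.add_sub_cancel' hkm, ← pow_succ]
  · -- the divisibility iff
    obtain ⟨d', hd'⟩ := hcdd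
    have hcne : (c : ℤ) ≠ 0 := by exact_mod_cast hc0.ne'
    have he2 : ((2 * 2 ^ (m - k) : ℕ) : ℤ) = 2 ^ (m - k + 1) := by push_cast; ring
    have hNe : (2 : ℤ) ^ (m + 1) = c * 2 ^ (m - k + 1) := by
      rw [hck]; push_cast
      rw [← pow_add]
      congr 1
      omega
    have hodd : Odd d' := by
      by_contra hev
      rw [Int.not_odd_iff_even] at hev
      obtain ⟨d'', hd''⟩ := hev
      have h1 : ((2 * c : ℕ) : ℤ) ∣ d := ⟨d'', by rw [hd', hd'']; push_cast; ring⟩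
      have h2 : ((2 * c : ℕ) : ℤ) ∣ (2 : ℤ) ^ (m + 1) := by
        rw [hck]; push_cast
        have heq : (2:ℤ) ^ (m + 1) = 2 * 2 ^ k * 2 ^ (m - k) := by
          rw [mul_assoc, ← pow_add, show k + (m - k) = m from Nat.add_sub_cancel' hkm,
            ← pow_succ']
        exact ⟨2 ^ (m - k), heq⟩
      have h3 : ((2 * c : ℕ) : ℤ) ∣ (c : ℤ) := Int.dvd_coe_gcd h1 h2
      have h4 : (2 * c : ℕ) ∣ c := by exact_mod_cast h3
      have := Nat.le_of_dvd hc0 h4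
      omega
    have hcop : IsCoprime ((2 : ℤ) ^ (m - k + 1)) d' := by
      apply IsCoprime.pow_left
      refine (Int.prime_two.coprime_iff_not_dvd).mpr ?_
      rw [← even_iff_two_dvd]
      exact Int.not_even_iff_odd.mpr hodd
    intro t
    rw [he2]
    constructor
    · intro h
      rw [hNe, hd'] at h
      have h5 : (c : ℤ) * 2 ^ (m - k + 1) ∣ (c : ℤ) * (d' * t) := by
        convert h using 1; ring
      have h6 : (2 : ℤ) ^ (m - k + 1) ∣ d' * t := (mul_dvd_mul_iff_left hcne).mp h5
      exact hcop.dvd_of_dvd_mul_left h6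
    · rintro ⟨s, rfl⟩
      rw [hNe, hd']
      exact ⟨d' * s, by ring⟩

lemma sum_multiples (M c N' : ℕ) (h : c * N' = M) (hN' : 0 < N') (f : ℕ → ℂ) :
    ∑ t ∈ Finset.range M, (if N' ∣ t then f t else 0) = ∑ j ∈ Finset.range c, f (N' * j) := by
  rw [← Finset.sum_filter]
  apply Finset.sum_nbij' (i := fun t => t / N') (j := fun j => N' * j)
  · intro a ha
    simp only [Finset.mem_filter, Finset.mem_range] at ha
    obtain ⟨haM, q, hq⟩ := ha
    subst hq
    rw [Nat.mul_div_cancel_left _ hN', Finset.mem_range]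
    by_contra hq
    push_neg at hq
    have : c * N' ≤ N' * q := Nat.mul_le_mul_right N' hq |>.trans_eq (Nat.mul_comm q N')
    omega
  · intro a ha
    simp only [Finset.mem_range] at ha
    simp only [Finset.mem_filter, Finset.mem_range]
    constructor
    · calc N' * a < N' * c := (Nat.mul_lt_mul_left hN').mpr ha
        _ = M := by rw [Nat.mul_comm, h]
    · exact Dvd.intro a rfl
  · intro a ha
    simp only [Finset.mem_filter] at ha
    exact Nat.mul_div_cancel' ha.2
  · intro a _
    exact Nat.mul_div_cancel_left a hN'
  · intro a ha
    simp only [Finset.mem_filter] at ha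
    rw [Nat.mul_div_cancel' ha.2]

lemma main_calc (n : ℕ) (hn : 1 ≤ n) (mu mv ku kv : ℤ)
    (hd0 : mv - mu ≠ 0) (hdlt : |mv - mu| < 2 ^ n) :
    (starRingEnd ℂ) (∑ k ∈ Finset.range (2 ^ n),
        ee n (mv * ((k : ℤ) - kv) ^ 2 - mu * ((k : ℤ) - ku) ^ 2)) *
      (∑ k ∈ Finset.range (2 ^ n),
        ee n (mv * ((k : ℤ) - kv) ^ 2 - mu * ((k : ℤ) - ku) ^ 2)) =
    if ((Int.gcd (mv - mu) (2 ^ n) : ℤ)) ∣ (mv * kv - mu * ku) then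
      ((2 ^ n : ℕ) : ℂ) * (Int.gcd (mv - mu) (2 ^ n) : ℂ) else 0 := by
  set d : ℤ := mv - mu with hd
  set b : ℤ := mv * kv - mu * ku with hb
  set c : ℕ := Int.gcd d (2 ^ n) with hc
  obtain ⟨e, hce, hiff, he0⟩ := gcd_facts n hn d hd0 hdlt
  set N' : ℕ := 2 * e with hN'
  set F : ℤ → ℤ := fun k => mv * (k - kv) ^ 2 - mu * (k - ku) ^ 2 with hF
  have hNc : ((2:ℤ)) ^ n = (c : ℤ) * (N' : ℤ) := by
    have h2 := congrArg (fun x : ℕ => (x : ℤ)) hce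
    push_cast at h2
    exact h2.symm
  have hN'0 : ((N' : ℤ)) ≠ 0 := by positivity
  -- Periodicity of F modulo 2^(n+1)
  have hper : ∀ s l : ℤ, (2 ^ n : ℤ) ∣ s - l → (2 ^ (n+1) : ℤ) ∣ F s - F l := by
    intro s l h
    have h1 : (2 ^ (n+1) : ℤ) ∣ (s - kv) ^ 2 - (l - kv) ^ 2 :=
      sq_congr n hn (by convert h using 1; ring)
    have h2 : (2 ^ (n+1) : ℤ) ∣ (s - ku) ^ 2 - (l - ku) ^ 2 :=
      sq_congr n hn (by convert h using 1; ring)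
    have heq : F s - F l = mv * ((s - kv) ^ 2 - (l - kv) ^ 2)
        - mu * ((s - ku) ^ 2 - (l - ku) ^ 2) := by simp only [hF]; ring
    rw [heq]
    exact dvd_sub (h1.mul_left mv) (h2.mul_left mu)
  have A1 : (starRingEnd ℂ) (∑ k ∈ Finset.range (2 ^ n), ee n (F k)) *
      (∑ k ∈ Finset.range (2 ^ n), ee n (F k)) =
      ∑ l ∈ Finset.range (2 ^ n), ∑ k ∈ Finset.range (2 ^ n), ee n (F k - F l) := by
    rw [map_sum, Finset.sum_mul_sum]
    apply Finset.sum_congr rfl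
    intro l _
    apply Finset.sum_congr rfl
    intro k _
    rw [ee_conj, ← ee_add]
    congr 1
    ring
  have A2 : ∀ l : ℤ, ∑ k ∈ Finset.range (2 ^ n), ee n (F (k : ℤ) - F l)
      = ∑ t ∈ Finset.range (2 ^ n), ee n (F ((t : ℤ) + l) - F l) := by
    intro l
    refine (sum_shift (2 ^ n) (fun k => ee n (F k - F l)) (fun k => ?_) l).symm
    apply ee_congr
    have h := hper (k + (2 ^ n : ℕ)) k ⟨1, by push_cast; ring⟩
    convert h using 1
    all_goals push_cast; ring
  have A3 : ∀ t l : ℤ, ee n (F (t + l) - F l)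
      = ee n (d * t ^ 2 - 2 * b * t) * ee n (2 * (d * t) * l) := by
    intro t l
    rw [← ee_add]
    congr 1
    simp only [hF, hd, hb]
    ring
  have A4 : ∀ t : ℤ, ∑ l ∈ Finset.range (2 ^ n), ee n (2 * (d * t) * (l : ℤ))
      = if (N' : ℤ) ∣ t then ((2 ^ n : ℕ) : ℂ) else 0 := by
    intro t
    have h1 : ∀ l ∈ Finset.range (2 ^ n),
        ee n (2 * (d * t) * (l : ℤ)) = ee n (2 * (d * t)) ^ l :=
      fun l _ => (ee_pow n (2 * (d * t)) l).symm
    rw [Finset.sum_congr rfl h1]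
    have h2 : ee n (2 * (d * t)) ^ (2 ^ n) = 1 := by
      rw [ee_pow]
      have heq : 2 * (d * t) * ((2 ^ n : ℕ) : ℤ) = 2 ^ (n + 1) * (d * t) := by
        push_cast; ring
      rw [heq, ee_mul_unit]
    rw [geom_root (2 ^ n) _ h2]
    congr 1
    rw [eq_iff_iff, ee_eq_one_iff]
    exact hiff t
  -- divisibility for the diagonal term
  have hdN : ∀ j : ℤ, (2 ^ (n+1) : ℤ) ∣ (d * ((N' : ℤ) * j) ^ 2 - 2 * b * ((N' : ℤ) * j))
      - ((-(2 * b * (N' : ℤ))) * j) := by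
    intro j
    obtain ⟨w, hw⟩ : (2 ^ n : ℤ) ∣ d * (N' : ℤ) := (hiff _).mpr dvd_rfl
    refine ⟨w * e * j ^ 2, ?_⟩
    have : d * ((N':ℤ) * j) ^ 2 - 2 * b * ((N':ℤ) * j) - (-(2 * b * (N':ℤ))) * j
        = (d * (N':ℤ)) * (N':ℤ) * j ^ 2 := by ring
    rw [this, hw, hN']
    push_cast
    ring
  have A5 : ∑ j ∈ Finset.range c, ee n ((-(2 * b * (N' : ℤ))) * (j:ℤ))
      = if (c : ℤ) ∣ b then (c : ℂ) else 0 := by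
    have h1 : ∀ j ∈ Finset.range c,
        ee n ((-(2 * b * (N' : ℤ))) * (j:ℤ)) = ee n (-(2 * b * (N' : ℤ))) ^ j :=
      fun j _ => by rw [ee_pow]
    rw [Finset.sum_congr rfl h1]
    have h2 : ee n (-(2 * b * (N' : ℤ))) ^ c = 1 := by
      rw [ee_pow]
      have heq : -(2 * b * (N':ℤ)) * (c:ℤ) = 2 ^ (n + 1) * (-b) := by
        rw [pow_succ]
        rw [hNc]
        ring
      rw [heq, ee_mul_unit]
    rw [geom_root c _ h2]
    congr 1
    rw [eq_iff_iff]
    have heq : -(2 * b * (N':ℤ)) = 2 * (-(b * (N':ℤ))) := by ring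
    rw [heq, ee_eq_one_iff, dvd_neg]
    constructor
    · intro h
      rw [hNc] at h
      exact (mul_dvd_mul_iff_right hN'0).mp h
    · intro h
      rw [hNc]
      exact mul_dvd_mul_right h _
  -- assemble
  rw [A1]
  rw [Finset.sum_congr rfl (fun l (_ : l ∈ Finset.range (2^n)) => A2 (l:ℤ))]
  rw [Finset.sum_comm]
  rw [Finset.sum_congr rfl (fun t (_ : t ∈ Finset.range (2^n)) =>
    Finset.sum_congr rfl (fun l (_ : l ∈ Finset.range (2^n)) => A3 (t:ℤ) (l:ℤ)))]
  have A6 : ∀ t ∈ Finset.range (2 ^ n),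
      ∑ l ∈ Finset.range (2 ^ n), ee n (d * (t:ℤ) ^ 2 - 2 * b * (t:ℤ)) * ee n (2 * (d * (t:ℤ)) * (l:ℤ))
      = if N' ∣ t then ee n (d * (t:ℤ) ^ 2 - 2 * b * (t:ℤ)) * ((2 ^ n : ℕ) : ℂ) else 0 := by
    intro t _
    rw [← Finset.mul_sum, A4 t, mul_ite, mul_zero]
    simp [Int.natCast_dvd_natCast]
  rw [Finset.sum_congr rfl A6]
  rw [sum_multiples (2 ^ n) c N' hce (by omega)
    (fun t => ee n (d * (t:ℤ) ^ 2 - 2 * b * (t:ℤ)) * ((2 ^ n : ℕ) : ℂ))]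
  have A7 : ∀ j ∈ Finset.range c,
      ee n (d * ((N' * j : ℕ) : ℤ) ^ 2 - 2 * b * ((N' * j : ℕ) : ℤ)) * ((2 ^ n : ℕ) : ℂ)
      = ee n ((-(2 * b * (N' : ℤ))) * (j : ℤ)) * ((2 ^ n : ℕ) : ℂ) := by
    intro j _
    congr 1
    apply ee_congr
    have h := hdN (j : ℤ)
    convert h using 1
    all_goals push_cast; ring
  rw [Finset.sum_congr rfl A7, ← Finset.sum_mul, A5]
  split_ifs with h
  · ring
  · simp

lemma emod_sub_dvd (n : ℕ) (x : ℤ) : (2 ^ n : ℤ) ∣ (x % 2 ^ n) - x :=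
  ⟨-(x / 2 ^ n), by rw [Int.emod_def]; ring⟩


/-- The maximum over all shifts of the squared cross-correlation of two Zadoff–Chu sequences
with distinct odd roots equals `gcd(m_v − m_u, N)/N`, and it is attained. -/
theorem zc_cross_correlation_max (n : ℕ) (hn : 1 ≤ n) (mu mv : ℤ)
    (hu : Odd mu) (hv : Odd mv) (hne : mu ≠ mv)
    (hu1 : 1 ≤ mu) (hu2 : mu ≤ 2 ^ n - 1) (hv1 : 1 ≤ mv) (hv2 : mv ≤ 2 ^ n - 1) :
    let N : ℤ := 2 ^ n
    let z : ℤ → ℤ → ℂ := fun m k =>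
      (1 / Real.sqrt (2 ^ n) : ℝ) *
        Complex.exp (Complex.I * (Real.pi : ℂ) * (m : ℂ) * (k : ℂ) ^ 2 / ((2 ^ n : ℕ) : ℂ))
    let ψ : ℤ → ℤ → ℂ := fun ku kv => ∑ k ∈ Finset.range (2 ^ n),
      (starRingEnd ℂ) (z mu (((k : ℤ) - ku) % N)) * z mv (((k : ℤ) - kv) % N)
    IsGreatest {x : ℝ | ∃ ku kv : ℤ, x = ‖ψ ku kv‖ ^ 2}
      ((Int.gcd (mv - mu) (2 ^ n) : ℝ) / (2 ^ n : ℕ)) := by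
  intro N z ψ
  have hd0 : mv - mu ≠ 0 := sub_ne_zero.mpr (Ne.symm hne)
  have h2n : (2 : ℤ) ≤ 2 ^ n := by
    calc (2:ℤ) = 2 ^ 1 := (pow_one 2).symm
    _ ≤ 2 ^ n := pow_le_pow_right₀ (by norm_num) hn
  have hdlt : |mv - mu| < 2 ^ n := by
    rw [abs_lt]
    constructor <;> linarith
  set c : ℕ := Int.gcd (mv - mu) (2 ^ n) with hc
  set S : ℤ → ℤ → ℂ := fun ku kv => ∑ k ∈ Finset.range (2 ^ n),
    ee n (mv * ((k : ℤ) - kv) ^ 2 - mu * ((k : ℤ) - ku) ^ 2) with hS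
  have hsqrt : ((1 / Real.sqrt (2 ^ n) : ℝ) : ℂ) * ((1 / Real.sqrt (2 ^ n) : ℝ) : ℂ)
      = (((2 : ℝ) ^ n)⁻¹ : ℝ) := by
    rw [← Complex.ofReal_mul]
    congr 1
    rw [div_mul_div_comm, one_mul, Real.mul_self_sqrt (by positivity)]
    rw [one_div]
  have hzexp : ∀ m x : ℤ, Complex.exp (Complex.I * (Real.pi : ℂ) * (m : ℂ) * (x : ℂ) ^ 2
      / ((2 ^ n : ℕ) : ℂ)) = ee n (m * x ^ 2) := by
    intro m x
    rw [ee]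
    congr 1
    push_cast
    ring
  have hψ : ∀ ku kv : ℤ, ψ ku kv = (((2 : ℝ) ^ n)⁻¹ : ℝ) * S ku kv := by
    intro ku kv
    show (∑ k ∈ Finset.range (2 ^ n),
      (starRingEnd ℂ) (z mu (((k : ℤ) - ku) % N)) * z mv (((k : ℤ) - kv) % N)) = _
    rw [hS, Finset.mul_sum]
    apply Finset.sum_congr rfl
    intro k _
    show (starRingEnd ℂ) (((1 / Real.sqrt (2 ^ n) : ℝ) : ℂ) *
        Complex.exp (Complex.I * (Real.pi : ℂ) * (mu : ℂ) * ((((k : ℤ) - ku) % N : ℤ) : ℂ) ^ 2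
          / ((2 ^ n : ℕ) : ℂ))) *
      (((1 / Real.sqrt (2 ^ n) : ℝ) : ℂ) *
        Complex.exp (Complex.I * (Real.pi : ℂ) * (mv : ℂ) * ((((k : ℤ) - kv) % N : ℤ) : ℂ) ^ 2
          / ((2 ^ n : ℕ) : ℂ))) = _
    rw [hzexp mu (((k : ℤ) - ku) % N), hzexp mv (((k : ℤ) - kv) % N)]
    rw [map_mul, Complex.conj_ofReal, ee_conj]
    have hrearr : ((1 / Real.sqrt (2 ^ n) : ℝ) : ℂ) * ee n (-(mu * (((k : ℤ) - ku) % N) ^ 2)) *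
        (((1 / Real.sqrt (2 ^ n) : ℝ) : ℂ) * ee n (mv * (((k : ℤ) - kv) % N) ^ 2))
        = (((1 / Real.sqrt (2 ^ n) : ℝ) : ℂ) * ((1 / Real.sqrt (2 ^ n) : ℝ) : ℂ)) *
          (ee n (-(mu * (((k : ℤ) - ku) % N) ^ 2)) * ee n (mv * (((k : ℤ) - kv) % N) ^ 2)) := by
      ring
    rw [hrearr, hsqrt, ← ee_add]
    congr 1
    apply ee_congr
    have h1 : (2 ^ (n + 1) : ℤ) ∣ ((((k : ℤ) - ku) % N)) ^ 2 - ((k : ℤ) - ku) ^ 2 :=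
      sq_congr n hn (emod_sub_dvd n _)
    have h2 : (2 ^ (n + 1) : ℤ) ∣ ((((k : ℤ) - kv) % N)) ^ 2 - ((k : ℤ) - kv) ^ 2 :=
      sq_congr n hn (emod_sub_dvd n _)
    have heq : (-(mu * (((k : ℤ) - ku) % N) ^ 2) + mv * (((k : ℤ) - kv) % N) ^ 2)
        - (mv * ((k : ℤ) - kv) ^ 2 - mu * ((k : ℤ) - ku) ^ 2)
        = mv * (((((k : ℤ) - kv) % N)) ^ 2 - ((k : ℤ) - kv) ^ 2)
          - mu * (((((k : ℤ) - ku) % N)) ^ 2 - ((k : ℤ) - ku) ^ 2) := by ring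
    rw [heq]
    exact dvd_sub (h2.mul_left mv) (h1.mul_left mu)
  have habs : ∀ ku kv : ℤ, ‖ψ ku kv‖ ^ 2
      = if (c : ℤ) ∣ (mv * kv - mu * ku) then (c : ℝ) / (2 ^ n : ℕ) else 0 := by
    intro ku kv
    rw [hψ ku kv]
    have hmc := main_calc n hn mu mv ku kv hd0 hdlt
    rw [mul_comm ((starRingEnd ℂ) _), Complex.mul_conj] at hmc
    rw [← hc] at hmc
    clear_value c
    have hnorm : Complex.normSq (S ku kv) =
        if (c : ℤ) ∣ (mv * kv - mu * ku) then ((2 ^ n : ℕ) : ℝ) * (c : ℝ) else 0 := by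
      split_ifs at hmc ⊢ with h
      · exact_mod_cast hmc
      · exact_mod_cast hmc
    rw [norm_mul, mul_pow, Complex.norm_real, Real.norm_eq_abs, Complex.sq_norm, hnorm]
    split_ifs with h
    · rw [_root_.abs_of_nonneg (by positivity : (0:ℝ) ≤ (2 ^ n)⁻¹)]
      push_cast
      field_simp
    · rw [mul_zero]
  constructor
  · refine ⟨0, 0, ?_⟩
    rw [habs 0 0, if_pos (by simp)]
  · rintro x ⟨ku, kv, rfl⟩
    rw [habs ku kv]
    split_ifs with h
    · exact le_refl _
    · positivity
end
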